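/- Let N ≥ 2 be an integer, η̄ > 0, ξ̄ ∈ (0,1), and set c* = η̄ / (2^{N-2} |ln ξ̄|^{N-1}), assuming additionally c*^N + c* |ln ξ̄|^{N-1} ≤ N η̄ / 2^{N-2}. Define a_n = exp(-c* n^{1/N}). Then for every n ≥ 0, a_{n+1} ≥ a_n (1 - η̄ / (|ln(ξ̄ a_n)|)^{N-1}). -/

import Mathlib

set_option maxHeartbeats 1000000

theorem seq_recursive_lower_bound (N : ℕ) (hN : 2 ≤ N) (η ξ : ℝ)
    (hη : 0 < η) (hξ0 : 0 < ξ) (hξ1 : ξ < 1)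
    (c : ℝ) (hc : c = η / (2 ^ (N - 2) * |Real.log ξ| ^ (N - 1)))
    (hc2 : c ^ N + c * |Real.log ξ| ^ (N - 1) ≤ N * η / 2 ^ (N - 2))
    (a : ℕ → ℝ) (ha : ∀ n : ℕ, a n = Real.exp (-c * (n : ℝ) ^ ((1 : ℝ) / N))) :
    ∀ n : ℕ, a n * (1 - η / |Real.log (ξ * a n)| ^ (N - 1)) ≤ a (n + 1) := by
  obtain ⟨m, rfl⟩ : ∃ m, N = m + 2 := ⟨N - 2, by omega⟩
  intro n
  simp only [show m + 2 - 2 = m by omega, show m + 2 - 1 = m + 1 by omega] at hc hc2 ⊢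
  have hlogξ : Real.log ξ < 0 := Real.log_neg hξ0 hξ1
  set L : ℝ := |Real.log ξ| with hLdef
  have hL0 : 0 < L := abs_pos.mpr (ne_of_lt hlogξ)
  have hc0 : 0 < c := by rw [hc]; positivity
  set p : ℝ := 1 / (m + 2 : ℕ) with hpdef
  have hNpos : (0:ℝ) < (m + 2 : ℕ) := by positivity
  have hp0 : 0 < p := by positivity
  have hp1 : p ≤ 1 := by
    rw [hpdef]
    rw [div_le_one hNpos]
    exact_mod_cast by omega
  have han : ∀ k : ℕ, 0 < a k := fun k => (ha k) ▸ Real.exp_pos _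
  -- |log (ξ * a n)| = L + c * n^p
  set t : ℝ := (n : ℝ) with htdef
  have ht0 : 0 ≤ t := Nat.cast_nonneg n
  have hrp : 0 ≤ t ^ p := Real.rpow_nonneg ht0 p
  have hlog : |Real.log (ξ * a n)| = L + c * t ^ p := by
    rw [Real.log_mul (ne_of_gt hξ0) (ne_of_gt (han n)), ha n, Real.log_exp]
    rw [abs_of_neg (by nlinarith : Real.log ξ + -c * t ^ p < 0)]
    rw [hLdef, abs_of_neg hlogξ]; ring
  set M : ℝ := L + c * t ^ p with hMdef
  have hM0 : 0 < M := by positivity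
  have hMpow : (0:ℝ) < M ^ (m + 1) := by positivity
  set δ : ℝ := ((n:ℝ) + 1) ^ p - t ^ p with hδdef
  have hδ0 : 0 ≤ δ := by
    have := Real.rpow_le_rpow ht0 (by linarith : t ≤ (n:ℝ) + 1) (le_of_lt hp0)
    linarith
  have hsplit : a (n + 1) = a n * Real.exp (-c * δ) := by
    rw [ha n, ha (n+1), ← Real.exp_add]
    congr 1
    push_cast
    ring
  -- key inequality
  have hkey : c * δ * M ^ (m + 1) ≤ η := by
    rcases Nat.eq_zero_or_pos n with hn0 | hn1
    · -- n = 0 : δ = 1, M = L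
      subst hn0
      have ht0' : t = 0 := by simp [htdef]
      have hδ1 : δ = 1 := by
        rw [hδdef, ht0', Real.zero_rpow (ne_of_gt hp0)]
        norm_num
      have hM' : M = L := by rw [hMdef, ht0', Real.zero_rpow (ne_of_gt hp0)]; ring
      rw [hδ1, hM', mul_one]
      have h2 : (1:ℝ) ≤ 2 ^ m := one_le_pow₀ (by norm_num)
      have heq : c * L ^ (m + 1) = η / 2 ^ m := by
        rw [hc]; field_simp
      rw [heq]
      exact div_le_self (le_of_lt hη) h2
    · -- n ≥ 1
      have ht1 : 1 ≤ t := by rw [htdef]; exact_mod_cast Nat.one_le_iff_ne_zero.mpr (Nat.pos_iff_ne_zero.mp hn1)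
      set u : ℝ := t ^ p with hudef
      have hu1 : 1 ≤ u := Real.one_le_rpow ht1 (le_of_lt hp0)
      have hu0 : 0 < u := lt_of_lt_of_le one_pos hu1
      have huN : u ^ (m + 2) = t := by
        rw [hudef, ← Real.rpow_natCast (t ^ p) (m + 2), ← Real.rpow_mul ht0]
        rw [hpdef]
        rw [one_div, inv_mul_cancel₀ (ne_of_gt hNpos), Real.rpow_one]
      have hut : u ≤ t := by
        calc u = t ^ p := rfl
          _ ≤ t ^ (1:ℝ) := Real.rpow_le_rpow_of_exponent_le ht1 hp1
          _ = t := Real.rpow_one t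
      -- δ ≤ p * u / t
      have hδle : δ ≤ p * u / t := by
        have htpos : 0 < t := lt_of_lt_of_le one_pos ht1
        have hexp : ((n:ℝ) + 1) ^ p = u * (1 + 1/t) ^ p := by
          rw [hudef, ← Real.mul_rpow ht0 (by positivity)]
          congr 1
          field_simp
          rw [htdef]
        have hbern : (1 + 1/t) ^ p ≤ 1 + p * (1/t) :=
          rpow_one_add_le_one_add_mul_self (by have := one_div_pos.mpr htpos; linarith : (-1:ℝ) ≤ 1/t) (le_of_lt hp0) hp1
        have : ((n:ℝ) + 1) ^ p ≤ u * (1 + p * (1/t)) := by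
          rw [hexp]
          exact mul_le_mul_of_nonneg_left hbern (le_of_lt hu0)
        have : δ ≤ u * (1 + p * (1/t)) - u := by
          rw [hδdef]; rw [← hudef] at *; linarith
        calc δ ≤ u * (1 + p * (1/t)) - u := this
          _ = p * u / t := by field_simp; ring
      -- M^(m+1) ≤ 2^m * (L^(m+1) + (c*u)^(m+1))
      have hMle : M ^ (m + 1) ≤ 2 ^ m * (L ^ (m + 1) + (c * u) ^ (m + 1)) := by
        have := add_pow_le (le_of_lt hL0) (by positivity : (0:ℝ) ≤ c * u) (m + 1)
        simpa using this
      have htpos : 0 < t := lt_of_lt_of_le one_pos ht1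
      calc c * δ * M ^ (m + 1)
          ≤ c * (p * u / t) * (2 ^ m * (L ^ (m + 1) + (c * u) ^ (m + 1))) := by
            apply mul_le_mul (by nlinarith) hMle (le_of_lt hMpow)
            positivity
        _ = p * 2 ^ m * (c * L ^ (m + 1) * (u / t) + c ^ (m + 2) * (u ^ (m + 2) / t)) := by
            field_simp
            ring
        _ = p * 2 ^ m * (c * L ^ (m + 1) * (u / t) + c ^ (m + 2)) := by
            rw [huN, div_self (ne_of_gt htpos)]; ring
        _ ≤ p * 2 ^ m * (c * L ^ (m + 1) * 1 + c ^ (m + 2)) := by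
            apply mul_le_mul_of_nonneg_left _ (by positivity)
            have h3 : u / t ≤ 1 := (div_le_one htpos).mpr hut
            have h4 : c * L ^ (m + 1) * (u / t) ≤ c * L ^ (m + 1) * 1 :=
              mul_le_mul_of_nonneg_left h3 (by positivity)
            linarith
        _ ≤ p * 2 ^ m * ((m + 2 : ℕ) * η / 2 ^ m) := by
            apply mul_le_mul_of_nonneg_left _ (by positivity)
            nlinarith [hc2]
        _ = η := by
            rw [hpdef]
            field_simp
  -- conclude
  rw [hsplit, hlog]
  apply mul_le_mul_of_nonneg_left _ (le_of_lt (han n))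
  have h1 : 1 - η / M ^ (m + 1) ≤ 1 + -c * δ := by
    have : c * δ ≤ η / M ^ (m + 1) := (le_div_iff₀ hMpow).mpr hkey
    linarith
  calc 1 - η / M ^ (m + 1) ≤ 1 + -c * δ := h1
    _ ≤ Real.exp (-c * δ) := by linarith [Real.add_one_le_exp (-c * δ)]
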